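/- Let μ be a probability measure on ℝ^d absolutely continuous with respect to Lebesgue measure and halfspace-symmetric about a point m (every closed halfspace containing m has μ-mass ≥ 1/2). Then TD(m; μ) = 1/2 = max_{x ∈ ℝ^d} TD(x; μ). -/

import Mathlib

open scoped RealInnerProductSpace
open MeasureTheory

/-!
Every closed halfspace through `m` has mass at least `1/2` by symmetry, so the Tukey depth of `m`
is at least `1/2`. Conversely, at any point `x` the two closed halfspaces bounded by a hyperplane
through `x` cover the space and meet in that hyperplane, which is null for an absolutely continuous
measure; their masses add up to `1`, so one of them has mass at most `1/2`.
-/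

noncomputable def tukeyDepth {E : Type*} [NormedAddCommGroup E] [InnerProductSpace ℝ E]
    [MeasurableSpace E] (μ : Measure E) (x : E) : ENNReal :=
  ⨅ v : Metric.sphere (0 : E) 1, μ {z | 0 ≤ ⟪(v : E), z - x⟫}

theorem measure_nonneg_add_measure_nonpos {α : Type*} [MeasurableSpace α] (μ : Measure α)
    {f : α → ℝ} (hf : Measurable f) :
    μ {a | 0 ≤ f a} + μ {a | f a ≤ 0} = μ Set.univ + μ {a | f a = 0} := by
  have hunion : {a | 0 ≤ f a} ∪ {a | f a ≤ 0} = Set.univ :=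
    Set.eq_univ_of_forall fun a => le_total 0 (f a)
  have hinter : {a | 0 ≤ f a} ∩ {a | f a ≤ 0} = {a | f a = 0} := by
    ext a
    exact ⟨fun h => le_antisymm h.2 h.1, fun h => ⟨h.ge, h.le⟩⟩
  rw [← measure_union_add_inter _ (measurableSet_le hf measurable_const), hunion, hinter]

section

variable {E : Type*} [NormedAddCommGroup E] [InnerProductSpace ℝ E] [MeasurableSpace E]

theorem measure_inner_sub_eq_zero_of_absolutelyContinuous [FiniteDimensional ℝ E] [BorelSpace E]
    {μ ν : Measure E} [ν.IsAddHaarMeasure] (hac : μ ≪ ν) {v : E} (hv : v ≠ 0) (x : E) :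
    μ {z | ⟪v, z - x⟫ = 0} = 0 := by
  apply hac
  have hker : LinearMap.ker (innerₛₗ ℝ v) ≠ ⊤ := fun h =>
    hv (inner_self_eq_zero.mp (h ▸ Submodule.mem_top : v ∈ LinearMap.ker (innerₛₗ ℝ v)))
  have hset : {z | ⟪v, z - x⟫ = 0} =
      (· + -x) ⁻¹' (LinearMap.ker (innerₛₗ ℝ v) : Set E) := by
    ext z
    simp [sub_eq_add_neg]
  rw [hset, measure_preimage_add_right]
  exact Measure.addHaar_submodule ν _ hker

theorem tukeyDepth_le_half [Nontrivial E] [FiniteDimensional ℝ E] [BorelSpace E]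
    {μ ν : Measure E} [IsProbabilityMeasure μ] [ν.IsAddHaarMeasure] (hac : μ ≪ ν) (x : E) :
    tukeyDepth μ x ≤ 1 / 2 := by
  obtain ⟨v, hv⟩ := exists_norm_eq E zero_le_one
  have hv0 : v ≠ 0 := norm_ne_zero_iff.mp (by simp [hv])
  have hle : tukeyDepth μ x ≤ μ {z | 0 ≤ ⟪v, z - x⟫} :=
    iInf_le_of_le ⟨v, mem_sphere_zero_iff_norm.mpr hv⟩ le_rfl
  have hle' : tukeyDepth μ x ≤ μ {z | ⟪v, z - x⟫ ≤ 0} := by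
    refine iInf_le_of_le ⟨-v, mem_sphere_zero_iff_norm.mpr (by rwa [norm_neg])⟩ ?_
    simp only [inner_neg_left, neg_nonneg, le_refl]
  have hsum : μ {z | 0 ≤ ⟪v, z - x⟫} + μ {z | ⟪v, z - x⟫ ≤ 0} = 1 := by
    rw [measure_nonneg_add_measure_nonpos μ (by fun_prop), measure_univ,
      measure_inner_sub_eq_zero_of_absolutelyContinuous hac hv0, add_zero]
  rw [one_div, ENNReal.le_inv_iff_mul_le, mul_two]
  exact (add_le_add hle hle').trans hsum.le

theorem half_le_tukeyDepth_of_halfspace_symmetric {μ : Measure E} {m : E}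
    (hsym : ∀ (v : E) (c : ℝ), ‖v‖ = 1 → c ≤ ⟪v, m⟫ → (1 / 2 : ENNReal) ≤ μ {z | c ≤ ⟪v, z⟫}) :
    1 / 2 ≤ tukeyDepth μ m := by
  refine le_iInf fun v => ?_
  simpa only [inner_sub_right, sub_nonneg] using
    hsym v ⟪(v : E), m⟫ (mem_sphere_zero_iff_norm.mp v.2) le_rfl

end

/-- A halfspace-symmetric absolutely continuous probability measure has Tukey depth `1/2` at its
center of symmetry, and this is the maximal Tukey depth. -/
theorem tukeyDepth_of_halfspace_symmetric {d : ℕ} (hd : 0 < d)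
    (μ : Measure (EuclideanSpace ℝ (Fin d))) [IsProbabilityMeasure μ]
    (hac : μ ≪ volume) (m : EuclideanSpace ℝ (Fin d))
    (hsym : ∀ (v : EuclideanSpace ℝ (Fin d)) (c : ℝ), ‖v‖ = 1 → c ≤ ⟪v, m⟫ →
      (1 / 2 : ENNReal) ≤ μ {z | c ≤ ⟪v, z⟫}) :
    (⨅ v : Metric.sphere (0 : EuclideanSpace ℝ (Fin d)) 1,
        μ {z | 0 ≤ ⟪(v : EuclideanSpace ℝ (Fin d)), z - m⟫}) = 1 / 2 ∧
    (⨆ x : EuclideanSpace ℝ (Fin d),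
        ⨅ v : Metric.sphere (0 : EuclideanSpace ℝ (Fin d)) 1,
          μ {z | 0 ≤ ⟪(v : EuclideanSpace ℝ (Fin d)), z - x⟫}) = 1 / 2 := by
  have : Nonempty (Fin d) := ⟨⟨0, hd⟩⟩
  have hle : ∀ x, tukeyDepth μ x ≤ 1 / 2 := tukeyDepth_le_half hac
  have hm : tukeyDepth μ m = 1 / 2 :=
    le_antisymm (hle m) (half_le_tukeyDepth_of_halfspace_symmetric hsym)
  exact ⟨hm, le_antisymm (iSup_le hle) (hm ▸ le_iSup (tukeyDepth μ) m)⟩
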